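/- Fix d ≥ 1, A ∈ 𝓡, r ≥ 0, and T ∈ (0,∞) with m(T) > 0. Suppose Assumption 1.1 holds, Assumption 3.2 holds at T, the claim vectors {X^(i), i ≥ 1} are RD_A, and the tail F̄_A(x) := P(X ∈ x·A) is positive for every x > 0. Define J_x(T) := Σ_{i≥1} 1{X^(i) e^{−r τ_i} ∈ x·A, τ_i ≤ T} and Λ_x := E[J_x(T)] = ∫_{[0,T]} P(X e^{−r s} ∈ x·A) ν(ds). Then P(J_x(T) ≥ 1) ∼ Λ_x as x → ∞. -/

import Mathlib

open MeasureTheory ProbabilityTheory Filter Topology Set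
open scoped Pointwise ENNReal NNReal

noncomputable section

/-- The family `𝓡` of open increasing subsets of `ℝ^d` with convex complement,
whose closure avoids the origin. -/
def InRfam (d : ℕ) (A : Set (Fin d → ℝ)) : Prop :=
  IsOpen A ∧ (∀ x ∈ A, ∀ z : Fin d → ℝ, (∀ i, 0 ≤ z i) → x + z ∈ A) ∧
    Convex ℝ Aᶜ ∧ (0 : Fin d → ℝ) ∉ closure A

/-- The functional `z ↦ z_A = sup {u > 0 : z ∈ u • A}` (real `sSup`, so `sup ∅ = 0`). -/
def projA {d : ℕ} (A : Set (Fin d → ℝ)) (z : Fin d → ℝ) : ℝ :=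
  sSup {u : ℝ | 0 < u ∧ z ∈ u • A}

/-- The tail `Ḡ_A(x) = P(Z_A > x)` of the one-dimensional distribution `G_A`
associated with a distribution `G` on `ℝ^d` and a set `A ∈ 𝓡`. -/
def tailA {d : ℕ} (A : Set (Fin d → ℝ)) (G : Measure (Fin d → ℝ)) (x : ℝ) : ℝ :=
  (G {z | x < projA A z}).toReal

/-- Product of two measures (via `bind`, no instance assumptions). -/
def mprod {α β : Type*} [MeasurableSpace α] [MeasurableSpace β]
    (μ : Measure α) (ν : Measure β) : Measure (α × β) :=
  μ.bind fun a => ν.map (Prod.mk a)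

/-- Tail at `x` of `Z¹_A + Z²_A` for independent `Z¹ ∼ G₁`, `Z² ∼ G₂`. -/
def tail2A {d : ℕ} (A : Set (Fin d → ℝ)) (G₁ G₂ : Measure (Fin d → ℝ)) (x : ℝ) : ℝ :=
  ((mprod G₁ G₂) {p | x < projA A p.1 + projA A p.2}).toReal

/-- `G ∈ 𝒮_A`: the distribution `G_A` has everywhere positive tail and is
subexponential, i.e. `P(Z¹_A + Z²_A > x) ∼ 2 Ḡ_A(x)` for independent copies. -/
def SubexpA {d : ℕ} (A : Set (Fin d → ℝ)) (G : Measure (Fin d → ℝ)) : Prop :=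
  (∀ x : ℝ, 0 < tailA A G x) ∧
    Tendsto (fun x => tail2A A G G x / tailA A G x) atTop (𝓝 2)

/-- Convolution: the law of the sum of independent draws from `μ` and `ν`. -/
def mconv {d : ℕ} (μ ν : Measure (Fin d → ℝ)) : Measure (Fin d → ℝ) :=
  (mprod μ ν).map fun p => p.1 + p.2

/-- Regression dependence with explicit constants `x₀, K`, in integrated form:
for every index `i`, finite nonempty `J` not containing `i`, level `xi > x₀` and
measurable set `S` of conditioning values all `> x₀`,
`P(Z_i > xi, (Z_j)_{j∈J} ∈ S) ≤ K · Ḡ_i(xi) · P((Z_j)_{j∈J} ∈ S)`. -/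
def RDwith {Ω : Type*} [MeasurableSpace Ω] (P : Measure Ω) (x₀ K : ℝ)
    {ι : Type*} (Z : ι → Ω → ℝ) : Prop :=
  ∀ i : ι, ∀ J : Finset ι, J.Nonempty → i ∉ J → ∀ xi : ℝ, x₀ < xi →
    ∀ S : Set (J → ℝ), MeasurableSet S → (∀ v ∈ S, ∀ j : J, x₀ < v j) →
      (P {ω | xi < Z i ω ∧ (fun j : J => Z j.1 ω) ∈ S}).toReal ≤
        K * (P {ω | xi < Z i ω}).toReal * (P {ω | (fun j : J => Z j.1 ω) ∈ S}).toReal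

/-- Regression dependence (`RD`). -/
def RD {Ω : Type*} [MeasurableSpace Ω] (P : Measure Ω) {ι : Type*} (Z : ι → Ω → ℝ) : Prop :=
  ∃ x₀ > (0 : ℝ), ∃ K > (0 : ℝ), RDwith P x₀ K Z

/-- `RD_A` for random vectors: the projections `Z^{(i)}_A` are `RD`. -/
def RDA {Ω : Type*} [MeasurableSpace Ω] (P : Measure Ω) {d : ℕ} (A : Set (Fin d → ℝ))
    {ι : Type*} (Z : ι → Ω → Fin d → ℝ) : Prop :=
  RD P fun i ω => projA A (Z i ω)

/-- Quasi asymptotic independence (`QAI`). -/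
def QAI {Ω : Type*} [MeasurableSpace Ω] (P : Measure Ω) {ι : Type*} (Z : ι → Ω → ℝ) : Prop :=
  ∀ i j : ι, i ≠ j →
    Tendsto (fun x : ℝ => (P {ω | x < Z i ω ∧ x < Z j ω}).toReal /
      ((P {ω | x < Z i ω}).toReal + (P {ω | x < Z j ω}).toReal)) atTop (𝓝 0)

/-- `QAI_A` for random vectors: the projections `Z^{(i)}_A` are `QAI`. -/
def QAIA {Ω : Type*} [MeasurableSpace Ω] (P : Measure Ω) {d : ℕ} (A : Set (Fin d → ℝ))
    {ι : Type*} (Z : ι → Ω → Fin d → ℝ) : Prop :=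
  QAI P fun i ω => projA A (Z i ω)

/-- The consistent variation class `𝒞` for a tail function `g`. -/
def ClassC (g : ℝ → ℝ) : Prop :=
  Tendsto (fun b : ℝ => limsup (fun x => g (b * x) / g x) atTop) (𝓝[<] (1 : ℝ)) (𝓝 1)

/-- The positively decreasing class `𝒫_𝒟` for a tail function `g`. -/
def ClassPD (g : ℝ → ℝ) : Prop :=
  ∃ v > (1 : ℝ), limsup (fun x => g (v * x) / g x) atTop < 1

/-- Upper Matuszewska index of a tail function. -/
def Jplus (g : ℝ → ℝ) : ℝ :=
  -limUnder atTop fun v : ℝ => Real.log (liminf (fun x => g (v * x) / g x) atTop) / Real.log v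

/-- Lower Matuszewska index of a tail function. -/
def Jminus (g : ℝ → ℝ) : ℝ :=
  -limUnder atTop fun v : ℝ => Real.log (limsup (fun x => g (v * x) / g x) atTop) / Real.log v

/-- `F ∈ MRV(α, μ)` with associated regularly varying tail `Vbar`: `Vbar` is the
tail of a distribution on `ℝ`, regularly varying with index `−α`; `μ` is a nonzero
measure, finite on Borel sets at positive distance from the origin; and
`P(X ∈ x • B)/Vbar x → μ(B)` for all such `B` with `μ(∂B) = 0`. -/
def IsMRV {d : ℕ} (F : Measure (Fin d → ℝ)) (α : ℝ) (μ : Measure (Fin d → ℝ))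
    (Vbar : ℝ → ℝ) : Prop :=
  (∃ V : Measure ℝ, IsProbabilityMeasure V ∧ ∀ x : ℝ, Vbar x = (V (Ioi x)).toReal) ∧
    (∀ᶠ x in atTop, 0 < Vbar x) ∧
    (∀ t : ℝ, 0 < t → Tendsto (fun x => Vbar (t * x) / Vbar x) atTop (𝓝 (t ^ (-α)))) ∧
    μ ≠ 0 ∧
    (∀ B : Set (Fin d → ℝ), MeasurableSet B → (∃ ε > (0 : ℝ), ∀ z ∈ B, ε ≤ ‖z‖) → μ B ≠ ⊤) ∧
    (∀ B : Set (Fin d → ℝ), MeasurableSet B → (∃ ε > (0 : ℝ), ∀ z ∈ B, ε ≤ ‖z‖) →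
      μ (frontier B) = 0 →
      Tendsto (fun x => (F (x • B)).toReal / Vbar x) atTop (𝓝 ((μ B).toReal)))

/-- Second factorial moment measure `α⁽²⁾` of the point process with points `τ i`:
the mean measure of the off-diagonal pairs `(τ i, τ j)`, `i ≠ j`. -/
def secondFactorial {Ω : Type*} [MeasurableSpace Ω] (P : Measure Ω) (τ : ℕ → Ω → ℝ) :
    Measure (ℝ × ℝ) :=
  Measure.sum fun p : {p : ℕ × ℕ // p.1 ≠ p.2} =>
    P.map fun ω => (τ p.1.1 ω, τ p.1.2 ω)

/-- The product measure `ν × ν`, where `ν(B) = ∑ᵢ P(τᵢ ∈ B)` is the mean measure. -/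
def nuProd {Ω : Type*} [MeasurableSpace Ω] (P : Measure Ω) (τ : ℕ → Ω → ℝ) :
    Measure (ℝ × ℝ) :=
  Measure.sum fun p : ℕ × ℕ => mprod (P.map (τ p.1)) (P.map (τ p.2))

/-- Assumption 3.2 at horizon `T` with constant `C`:
`α⁽²⁾(B) ≤ C · (ν × ν)(B)` for every Borel `B ⊆ [0,T]²`. -/
def Assumption32 {Ω : Type*} [MeasurableSpace Ω] (P : Measure Ω) (τ : ℕ → Ω → ℝ)
    (T C : ℝ) : Prop :=
  ∀ B : Set (ℝ × ℝ), MeasurableSet B → B ⊆ Icc (0 : ℝ) T ×ˢ Icc (0 : ℝ) T →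
    secondFactorial P τ B ≤ ENNReal.ofReal C * nuProd P τ B

/-- Discounted aggregate claims up to a finite time `T`. -/
def Dfin {Ω : Type*} {d : ℕ} (r : ℝ) (X : ℕ → Ω → Fin d → ℝ) (τ : ℕ → Ω → ℝ)
    (T : ℝ) (ω : Ω) : Fin d → ℝ :=
  ∑' i : ℕ, Set.indicator {ω' | τ i ω' ≤ T} (fun ω' => Real.exp (-(r * τ i ω')) • X i ω') ω

/-- Discounted aggregate claims over the infinite time horizon. -/
def Dinf {Ω : Type*} {d : ℕ} (r : ℝ) (X : ℕ → Ω → Fin d → ℝ) (τ : ℕ → Ω → ℝ)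
    (ω : Ω) : Fin d → ℝ :=
  ∑' i : ℕ, Real.exp (-(r * τ i ω)) • X i ω

/-- `J_x(T)`: the number of discounted claims entering `x • A` by time `T`. -/
def Jcount {Ω : Type*} {d : ℕ} (r : ℝ) (X : ℕ → Ω → Fin d → ℝ) (τ : ℕ → Ω → ℝ)
    (A : Set (Fin d → ℝ)) (T x : ℝ) (ω : Ω) : ℝ≥0∞ :=
  ∑' i : ℕ,
    Set.indicator {ω' | τ i ω' ≤ T ∧ Real.exp (-(r * τ i ω')) • X i ω' ∈ x • A}
      (fun _ => (1 : ℝ≥0∞)) ω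

/-- Pathwise discounted stochastic integral `∫₀ᵗ e^{−rs} B(ds)
  = e^{−rt} B(t) + r ∫₀ᵗ e^{−rs} B(s) ds`. -/
def discBM {Ω : Type*} (r : ℝ) (Bi : ℝ → Ω → ℝ) (t : ℝ) (ω : Ω) : ℝ :=
  Real.exp (-(r * t)) * Bi t ω + r * ∫ s in (0 : ℝ)..t, Real.exp (-(r * s)) * Bi s ω

/-- The insurer's surplus process `U(t)`. -/
def surplus {Ω : Type*} {d : ℕ} (r x : ℝ) (l : Fin d → ℝ) (c : Fin d → ℝ → Ω → ℝ)
    (δv : Fin d → ℝ) (Bm : Fin d → ℝ → Ω → ℝ) (X : ℕ → Ω → Fin d → ℝ) (τ : ℕ → Ω → ℝ)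
    (t : ℝ) (ω : Ω) : Fin d → ℝ :=
  fun k => x * l k + (∫ s in (0 : ℝ)..t, Real.exp (-(r * s)) * c k s ω)
    + δv k * discBM r (Bm k) t ω - Dfin r X τ t ω k

/-!
Let `E_i` be the event that the `i`-th discounted claim enters `x • A` by time `T`, so that
`{J_x(T) ≥ 1} = ⋃ E_i` and `Λ_x = ∑ P(E_i)`. Subadditivity gives `P(⋃ E_i) ≤ Λ_x`, and the
Bonferroni inequality gives `Λ_x ≤ P(⋃ E_i) + ∑_{i ≠ j} P(E_i ∩ E_j)`. Conditioning on the
arrival times, regression dependence bounds `P(E_i ∩ E_j)` by `K` times the product of the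
single-claim tails at the two arrival times, and Assumption 3.2 then bounds the double sum by
`C K Λ_x²`. Since `Λ_x ≤ m(T) P(X ∈ x • A) → 0`, the ratio `P(J_x(T) ≥ 1) / Λ_x` is squeezed
between `1 - C K Λ_x` and `1`.
-/

namespace InRfam

variable {d : ℕ} {A : Set (Fin d → ℝ)}

theorem smul_mem_of_le (hA : InRfam d A) {z : Fin d → ℝ} (hz : 0 ≤ z) {u v : ℝ}
    (hu : 0 < u) (huv : u ≤ v) (hv : z ∈ v • A) : z ∈ u • A := by
  rw [mem_smul_set_iff_inv_smul_mem₀ (hu.trans_le huv).ne'] at hv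
  rw [mem_smul_set_iff_inv_smul_mem₀ hu.ne']
  have hsplit : u⁻¹ • z = v⁻¹ • z + (u⁻¹ - v⁻¹) • z := by rw [← add_smul, add_sub_cancel]
  rw [hsplit]
  exact hA.2.1 _ hv _ fun k => mul_nonneg (sub_nonneg.2 (inv_anti₀ hu huv)) (hz k)

theorem exists_pos_lt_norm (hA : InRfam d A) : ∃ ε > (0 : ℝ), ∀ a ∈ A, ε < ‖a‖ := by
  have hfar := hA.2.2.2
  rw [Metric.mem_closure_iff] at hfar
  push Not at hfar
  obtain ⟨ε, hε, hfar⟩ := hfar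
  refine ⟨ε / 2, half_pos hε, fun a ha => ?_⟩
  have := hfar a ha
  rw [dist_zero_left] at this
  linarith

theorem bddAbove_smul_mem (hA : InRfam d A) (z : Fin d → ℝ) :
    BddAbove {u : ℝ | 0 < u ∧ z ∈ u • A} := by
  obtain ⟨ε, hε, hfar⟩ := hA.exists_pos_lt_norm
  refine ⟨‖z‖ / ε, fun u ⟨hu, a, ha, hz⟩ => ?_⟩
  rw [le_div_iff₀ hε, ← hz, norm_smul, Real.norm_of_nonneg hu.le]
  exact mul_le_mul_of_nonneg_left (hfar a ha).le hu.le

theorem mem_smul_iff_lt_projA (hA : InRfam d A) {z : Fin d → ℝ} (hz : 0 ≤ z) {u : ℝ}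
    (hu : 0 < u) : z ∈ u • A ↔ u < projA A z := by
  constructor
  · intro h
    rw [mem_smul_set_iff_inv_smul_mem₀ hu.ne'] at h
    have hcont : ContinuousAt (fun c : ℝ => c⁻¹ • z) u :=
      (continuousAt_inv₀ hu.ne').smul continuousAt_const
    -- `A` is open, so `z` stays in `c • A` for some `c > u`.
    obtain ⟨c, hcA, huc⟩ := ((hcont.eventually_mem (hA.1.mem_nhds h)).filter_mono
      nhdsWithin_le_nhds |>.and (self_mem_nhdsWithin (s := Ioi u))).exists
    have hc : 0 < c := hu.trans huc
    refine huc.trans_le (le_csSup (hA.bddAbove_smul_mem z) ⟨hc, ?_⟩)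
    rwa [mem_smul_set_iff_inv_smul_mem₀ hc.ne']
  · intro h
    have hne : {w : ℝ | 0 < w ∧ z ∈ w • A}.Nonempty := by
      by_contra hemp
      rw [not_nonempty_iff_eq_empty] at hemp
      rw [projA, hemp, Real.sSup_empty] at h
      exact hu.not_gt h
    obtain ⟨c, ⟨-, hc⟩, huc⟩ := exists_lt_of_lt_csSup hne h
    exact hA.smul_mem_of_le hz hu huc.le hc

theorem tendsto_measure_smul_atTop_zero (hA : InRfam d A) (μ : Measure (Fin d → ℝ))
    [IsFiniteMeasure μ] : Tendsto (fun x : ℝ => μ (x • A)) atTop (𝓝 0) := by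
  obtain ⟨ε, hε, hfar⟩ := hA.exists_pos_lt_norm
  have hball : Tendsto (fun R : ℝ => μ (Metric.closedBall 0 R)ᶜ) atTop (𝓝 0) := by
    simpa using tendsto_measure_compl_closedBall_of_isTightMeasureSet
      (isTightMeasureSet_singleton (μ := μ)) 0
  refine tendsto_of_tendsto_of_tendsto_of_le_of_le' tendsto_const_nhds
    (hball.comp (tendsto_id.const_mul_atTop hε)) (Eventually.of_forall fun _ => zero_le) ?_
  filter_upwards [eventually_gt_atTop 0] with x hx
  refine measure_mono ?_
  rintro _ ⟨a, ha, rfl⟩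
  simp only [mem_compl_iff, Metric.mem_closedBall, dist_zero_right, norm_smul,
    Real.norm_of_nonneg hx.le, not_le, id]
  exact mul_comm ε x ▸ mul_lt_mul_of_pos_left (hfar a ha) hx

end InRfam

section Probability

variable {α : Type*} [MeasurableSpace α]

theorem RDwith.measure_lt_inter_lt_le {Ω ι : Type*} [MeasurableSpace Ω] {P : Measure Ω}
    [IsFiniteMeasure P] {x₀ K : ℝ} {Z : ι → Ω → ℝ} (hRD : RDwith P x₀ K Z) (hK : 0 ≤ K)
    {i j : ι} (hij : i ≠ j) {u v : ℝ} (hu : x₀ < u) (hv : x₀ < v) :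
    P {ω | u < Z i ω ∧ v < Z j ω} ≤
      ENNReal.ofReal K * P {ω | u < Z i ω} * P {ω | v < Z j ω} := by
  have hj : j ∈ ({j} : Finset ι) := Finset.mem_singleton_self j
  have key := hRD i {j} (Finset.singleton_nonempty j) (by simpa using hij) u hu
    {f | v < f ⟨j, hj⟩} (measurable_pi_apply _ measurableSet_Ioi)
    fun f hf k => by
      obtain rfl : k = ⟨j, hj⟩ := Subtype.ext (Finset.mem_singleton.1 k.2)
      exact hv.trans hf
  rw [← ENNReal.toReal_le_toReal (measure_ne_top _ _) (by finiteness), ENNReal.toReal_mul,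
    ENNReal.toReal_mul, ENNReal.toReal_ofReal hK]
  exact key

theorem ProbabilityTheory.IndepFun.measure_preimage_prodMk_eq_lintegral {Ω β γ : Type*}
    [MeasurableSpace Ω] [MeasurableSpace β] [MeasurableSpace γ] {P : Measure Ω} [IsFiniteMeasure P]
    {σ : Ω → β} {Y : Ω → γ} (hind : IndepFun σ Y P) (hσ : Measurable σ) (hY : Measurable Y)
    {M : Set (β × γ)} (hM : MeasurableSet M) :
    P ((fun ω => (σ ω, Y ω)) ⁻¹' M) = ∫⁻ s, P.map Y (Prod.mk s ⁻¹' M) ∂P.map σ := by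
  rw [← Measure.map_apply (hσ.prodMk hY) hM,
    (indepFun_iff_map_prod_eq_prod_map_map hσ.aemeasurable hY.aemeasurable).1 hind,
    Measure.prod_apply hM]

theorem tsum_measure_le_measure_iUnion_add (μ : Measure α) {E : ℕ → Set α}
    (hE : ∀ i, MeasurableSet (E i)) :
    ∑' i, μ (E i) ≤ μ (⋃ i, E i) + ∑' p : {p : ℕ × ℕ // p.1 ≠ p.2}, μ (E p.1.1 ∩ E p.1.2) := by
  have hsplit : ∀ i, μ (E i) ≤ μ (disjointed E i) + ∑' j : {j // j < i}, μ (E i ∩ E j) := by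
    intro i
    have hcover : E i ⊆ disjointed E i ∪ ⋃ j : {j // j < i}, E i ∩ E j := by
      intro ω hω
      by_cases hprev : ∃ j < i, ω ∈ E j
      · obtain ⟨j, hj, hωj⟩ := hprev
        exact Or.inr (mem_iUnion.2 ⟨⟨j, hj⟩, hω, hωj⟩)
      · rw [disjointed_eq_inter_compl]
        exact Or.inl ⟨hω, mem_iInter₂.2 fun j hj hωj => hprev ⟨j, hj, hωj⟩⟩
    calc μ (E i) ≤ μ (disjointed E i) + μ (⋃ j : {j // j < i}, E i ∩ E j) :=
          (measure_mono hcover).trans (measure_union_le _ _)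
      _ ≤ _ := by gcongr; exact measure_iUnion_le _
  have hinj : Function.Injective fun q : Σ i, {j // j < i} =>
      (⟨(q.1, q.2.1), q.2.2.ne'⟩ : {p : ℕ × ℕ // p.1 ≠ p.2}) := by
    rintro ⟨i, j, hj⟩ ⟨i', j', hj'⟩ h
    simp only [Subtype.mk.injEq, Prod.mk.injEq] at h
    obtain ⟨rfl, rfl⟩ := h
    rfl
  calc ∑' i, μ (E i)
      ≤ ∑' i, (μ (disjointed E i) + ∑' j : {j // j < i}, μ (E i ∩ E j)) :=
        ENNReal.tsum_le_tsum hsplit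
    _ = μ (⋃ i, E i) + ∑' q : Σ i, {j // j < i}, μ (E q.1 ∩ E q.2) := by
        rw [ENNReal.tsum_add, ← measure_iUnion (disjoint_disjointed E)
          (MeasurableSet.disjointed hE), iUnion_disjointed, ENNReal.tsum_sigma']
    _ ≤ _ := by
        gcongr
        exact ENNReal.tsum_comp_le_tsum_of_injective hinj fun p => μ (E p.1.1 ∩ E p.1.2)

theorem lintegral_le_mul_lintegral_of_support_subset {μ ν : Measure α} {c : ℝ≥0∞}
    {S : Set α} (hS : MeasurableSet S)
    (hμν : ∀ B, MeasurableSet B → B ⊆ S → μ B ≤ c * ν B) {f : α → ℝ≥0∞}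
    (hf : f.support ⊆ S) : ∫⁻ a, f a ∂μ ≤ c * ∫⁻ a, f a ∂ν := by
  have hle : μ.restrict S ≤ c • ν.restrict S := Measure.le_iff.2 fun B hB => by
    rw [Measure.restrict_apply hB, Measure.smul_apply, Measure.restrict_apply hB, smul_eq_mul]
    exact hμν _ (hB.inter hS) inter_subset_right
  rw [← setLIntegral_eq_of_support_subset hf, ← setLIntegral_eq_of_support_subset (μ := ν) hf]
  exact (lintegral_mono' hle le_rfl).trans_eq (lintegral_smul_measure c _)

theorem lintegral_nuProd_mul {Ω : Type*} [MeasurableSpace Ω] (P : Measure Ω)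
    [IsFiniteMeasure P] (τ : ℕ → Ω → ℝ) {f : ℝ → ℝ≥0∞} (hf : Measurable f) :
    ∫⁻ st, f st.1 * f st.2 ∂nuProd P τ = (∑' i, ∫⁻ s, f s ∂P.map (τ i)) ^ 2 := by
  simp_rw [nuProd, lintegral_sum_measure, mprod, ← Measure.prod_def,
    lintegral_prod_mul hf.aemeasurable hf.aemeasurable]
  rw [ENNReal.tsum_prod (f := fun i j => (∫⁻ s, f s ∂P.map (τ i)) * ∫⁻ s, f s ∂P.map (τ j)),
    sq, ← ENNReal.tsum_mul_right]
  simp_rw [ENNReal.tsum_mul_left]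

theorem tendsto_toReal_div_of_le_of_le_add_sq {ι : Type*} {l : Filter ι} {a b : ι → ℝ≥0∞}
    {c : ℝ≥0∞} (hc : c ≠ ⊤) (hb0 : ∀ᶠ i in l, b i ≠ 0) (hb : Tendsto b l (𝓝 0))
    (hab : ∀ᶠ i in l, a i ≤ b i) (hba : ∀ᶠ i in l, b i ≤ a i + c * b i ^ 2) :
    Tendsto (fun i => (a i).toReal / (b i).toReal) l (𝓝 1) := by
  have hbfin : ∀ᶠ i in l, b i ≠ ⊤ :=
    (hb.eventually (gt_mem_nhds zero_lt_one)).mono fun i hi => (hi.trans ENNReal.one_lt_top).ne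
  have hlow : Tendsto (fun i => 1 - c.toReal * (b i).toReal) l (𝓝 1) := by
    simpa using tendsto_const_nhds.sub
      (((ENNReal.tendsto_toReal ENNReal.zero_ne_top).comp hb).const_mul c.toReal)
  refine tendsto_of_tendsto_of_tendsto_of_le_of_le' hlow tendsto_const_nhds ?_ ?_
  · filter_upwards [hb0, hbfin, hab, hba] with i h0 hfin hab hba
    have hafin : a i ≠ ⊤ := ne_top_of_le_ne_top hfin hab
    rw [le_div_iff₀ (ENNReal.toReal_pos h0 hfin)]
    have := ENNReal.toReal_mono (by finiteness) hba
    rw [ENNReal.toReal_add hafin (by finiteness), ENNReal.toReal_mul, ENNReal.toReal_pow] at this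
    nlinarith
  · filter_upwards [hbfin, hab] with i hfin hab
    exact div_le_one_of_le₀ (ENNReal.toReal_mono hfin hab) ENNReal.toReal_nonneg

end Probability

section ClaimModel

variable {Ω : Type*} {d : ℕ} {A : Set (Fin d → ℝ)} {F : Measure (Fin d → ℝ)}
  {X : ℕ → Ω → Fin d → ℝ} {τ : ℕ → Ω → ℝ} {r T x x₀ K : ℝ}

def claimRegion (A : Set (Fin d → ℝ)) (r T x : ℝ) : Set (ℝ × (Fin d → ℝ)) :=
  {p | p.1 ≤ T ∧ Real.exp (-(r * p.1)) • p.2 ∈ x • A}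

/-- The integrand `s ↦ 1{s ∈ [0,T]} P(X e^{-rs} ∈ x • A)` of `Λ_x = ∫ … ν(ds)`; the slice
of `claimRegion` is already empty for `s > T`. -/
def claimTail (F : Measure (Fin d → ℝ)) (A : Set (Fin d → ℝ)) (r T x : ℝ) (s : ℝ) : ℝ≥0∞ :=
  (Ici 0).indicator (fun s => F (Prod.mk s ⁻¹' claimRegion A r T x)) s

theorem measurableSet_claimRegion (hA : InRfam d A) (hx : 0 < x) :
    MeasurableSet (claimRegion A r T x) :=
  (measurable_fst measurableSet_Iic).inter <|
    ((Real.continuous_exp.comp (continuous_const.mul continuous_fst).neg).smul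
      continuous_snd).measurable (hA.1.smul₀ hx.ne').measurableSet

theorem claimRegion_slice (hx : 0 < x) {s : ℝ} (hs : s ≤ T) :
    Prod.mk s ⁻¹' claimRegion A r T x = (x * Real.exp (r * s)) • A := by
  ext a
  simp only [claimRegion, mem_preimage, mem_ofPred_eq, hs, true_and]
  rw [mem_smul_set_iff_inv_smul_mem₀ hx.ne', mem_smul_set_iff_inv_smul_mem₀ (by positivity),
    smul_smul, mul_inv, Real.exp_neg]

theorem claimRegion_slice_of_lt {s : ℝ} (hs : T < s) :
    Prod.mk s ⁻¹' claimRegion A r T x = ∅ :=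
  eq_empty_of_forall_notMem fun _ h => hs.not_ge h.1

theorem measurable_claimTail (hA : InRfam d A) [IsFiniteMeasure F] (hx : 0 < x) :
    Measurable (claimTail F A r T x) :=
  (measurable_measure_prodMk_left (measurableSet_claimRegion hA hx)).indicator measurableSet_Ici

theorem support_claimTail_subset : (claimTail F A r T x).support ⊆ Icc 0 T := by
  intro s hs
  by_contra hsT
  have hs0 : 0 ≤ s := by by_contra h; exact hs (indicator_of_notMem h _)
  exact hs (by rw [claimTail, indicator_of_mem (mem_Ici.2 hs0),
    claimRegion_slice_of_lt (lt_of_not_ge fun h => hsT ⟨hs0, h⟩), measure_empty])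

theorem measure_claimRegion_slice {s : ℝ} (hs : 0 ≤ s) :
    F (Prod.mk s ⁻¹' claimRegion A r T x) = claimTail F A r T x s :=
  (indicator_of_mem (mem_Ici.2 hs) (fun s => F (Prod.mk s ⁻¹' claimRegion A r T x))).symm

def claimEvent (r : ℝ) (X : ℕ → Ω → Fin d → ℝ) (τ : ℕ → Ω → ℝ) (A : Set (Fin d → ℝ))
    (T x : ℝ) (i : ℕ) : Set Ω :=
  (fun ω => (τ i ω, X i ω)) ⁻¹' claimRegion A r T x

theorem setOf_one_le_Jcount :
    {ω | 1 ≤ Jcount r X τ A T x ω} = ⋃ i, claimEvent r X τ A T x i := by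
  ext ω
  change 1 ≤ ∑' i, (claimEvent r X τ A T x i).indicator (fun _ => (1 : ℝ≥0∞)) ω ↔ _
  rw [mem_iUnion]
  constructor
  · intro h
    by_contra! hnone
    rw [ENNReal.tsum_eq_zero.2 fun i => indicator_of_notMem (hnone i) _] at h
    exact absurd h (by norm_num)
  · rintro ⟨i, hi⟩
    exact (indicator_of_mem hi (fun _ => (1 : ℝ≥0∞))).symm.le.trans (ENNReal.le_tsum i)

variable [MeasurableSpace Ω] {P : Measure Ω}

theorem measurableSet_claimEvent (hA : InRfam d A) (hx : 0 < x) {i : ℕ}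
    (hX : Measurable (X i)) (hτ : Measurable (τ i)) :
    MeasurableSet (claimEvent r X τ A T x i) :=
  (hτ.prodMk hX) (measurableSet_claimRegion hA hx)

theorem measure_claimEvent_eq_lintegral [IsFiniteMeasure P] (hA : InRfam d A) (hx : 0 < x)
    {i : ℕ} (hX : Measurable (X i)) (hτ : Measurable (τ i)) (hind : IndepFun (τ i) (X i) P)
    (hXd : P.map (X i) = F) (hτnn : ∀ ω, 0 ≤ τ i ω) :
    P (claimEvent r X τ A T x i) = ∫⁻ s, claimTail F A r T x s ∂P.map (τ i) := by
  rw [claimEvent,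
    hind.measure_preimage_prodMk_eq_lintegral hτ hX (measurableSet_claimRegion hA hx), hXd]
  refine lintegral_congr_ae ?_
  filter_upwards [(ae_map_iff hτ.aemeasurable measurableSet_Ici).2 (ae_of_all _ hτnn)]
    with s hs using measure_claimRegion_slice hs

theorem measure_setOf_le_inter_preimage_eq_mul {i : ℕ} (hX : Measurable (X i))
    (hind : IndepFun (τ i) (X i) P) (hXd : P.map (X i) = F) {B : Set (Fin d → ℝ)}
    (hB : MeasurableSet B) :
    P ({ω | τ i ω ≤ T} ∩ X i ⁻¹' B) = P {ω | τ i ω ≤ T} * F B := by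
  rw [← hXd, Measure.map_apply hX hB]
  exact hind.measure_inter_preimage_eq_mul _ _ measurableSet_Iic hB

theorem tsum_measure_claimEvent_le (hA : InRfam d A) (hr : 0 ≤ r) (hx : 0 < x)
    (hX : ∀ i, Measurable (X i)) (hXnn : ∀ i ω, 0 ≤ X i ω) (hXd : ∀ i, P.map (X i) = F)
    (hτnn : ∀ i ω, 0 ≤ τ i ω) (hind : ∀ i, IndepFun (τ i) (X i) P) :
    ∑' i, P (claimEvent r X τ A T x i) ≤ (∑' i, P {ω | τ i ω ≤ T}) * F (x • A) := by
  rw [← ENNReal.tsum_mul_right]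
  refine ENNReal.tsum_le_tsum fun i => ?_
  rw [← measure_setOf_le_inter_preimage_eq_mul (hX i) (hind i) (hXd i)
    (hA.1.smul₀ hx.ne').measurableSet]
  refine measure_mono fun ω hω => ?_
  have hmem : X i ω ∈ Prod.mk (τ i ω) ⁻¹' claimRegion A r T x := hω
  rw [claimRegion_slice hx hω.1] at hmem
  exact ⟨hω.1, hA.smul_mem_of_le (hXnn i ω) hx
    (le_mul_of_one_le_right hx.le (Real.one_le_exp (mul_nonneg hr (hτnn i ω)))) hmem⟩

theorem tsum_measure_claimEvent_pos (hA : InRfam d A) (hr : 0 ≤ r) (hx : 0 < x)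
    (hX : ∀ i, Measurable (X i)) (hXnn : ∀ i ω, 0 ≤ X i ω) (hXd : ∀ i, P.map (X i) = F)
    (hind : ∀ i, IndepFun (τ i) (X i) P) (hmT : 0 < ∑' i, P {ω | τ i ω ≤ T})
    (hF : 0 < F ((x * Real.exp (r * T)) • A)) :
    0 < ∑' i, P (claimEvent r X τ A T x i) := by
  obtain ⟨i, hi⟩ : ∃ i, 0 < P {ω | τ i ω ≤ T} := by
    by_contra! hnone
    simp [nonpos_iff_eq_zero.1 (hnone _)] at hmT
  have hxT : 0 < x * Real.exp (r * T) := by positivity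
  -- A claim exceeding the threshold at the horizon `T` exceeds it at every earlier time.
  have hsub : {ω | τ i ω ≤ T} ∩ X i ⁻¹' ((x * Real.exp (r * T)) • A) ⊆
      claimEvent r X τ A T x i := by
    rintro ω ⟨hτT, hmem⟩
    show X i ω ∈ Prod.mk (τ i ω) ⁻¹' claimRegion A r T x
    rw [claimRegion_slice hx hτT]
    exact hA.smul_mem_of_le (hXnn i ω) (by positivity) (by gcongr; exact hτT) hmem
  calc (0 : ℝ≥0∞) < P {ω | τ i ω ≤ T} * F ((x * Real.exp (r * T)) • A) :=
        ENNReal.mul_pos hi.ne' hF.ne'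
    _ = P ({ω | τ i ω ≤ T} ∩ X i ⁻¹' ((x * Real.exp (r * T)) • A)) :=
        (measure_setOf_le_inter_preimage_eq_mul (hX i) (hind i) (hXd i)
          (hA.1.smul₀ hxT.ne').measurableSet).symm
    _ ≤ _ := (measure_mono hsub).trans (ENNReal.le_tsum i)

theorem measure_mem_smul_inter_le [IsFiniteMeasure P] (hA : InRfam d A)
    (hRD : RDwith P x₀ K fun i ω => projA A (X i ω)) (hK : 0 ≤ K)
    (hX : ∀ i, Measurable (X i)) (hXnn : ∀ i ω, 0 ≤ X i ω) (hXd : ∀ i, P.map (X i) = F)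
    {i j : ℕ} (hij : i ≠ j) {u v : ℝ} (hu : x₀ < u) (hv : x₀ < v) (hu0 : 0 < u) (hv0 : 0 < v) :
    P {ω | X i ω ∈ u • A ∧ X j ω ∈ v • A} ≤ ENNReal.ofReal K * F (u • A) * F (v • A) := by
  have hiff : ∀ k ω {w : ℝ}, 0 < w → (X k ω ∈ w • A ↔ w < projA A (X k ω)) :=
    fun k ω _ hw => hA.mem_smul_iff_lt_projA (hXnn k ω) hw
  have hF : ∀ k {w : ℝ}, 0 < w → P {ω | w < projA A (X k ω)} = F (w • A) := by
    intro k w hw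
    rw [← hXd k, Measure.map_apply (hX k) (hA.1.smul₀ hw.ne').measurableSet]
    exact congrArg P (ext fun ω => (hiff k ω hw).symm)
  calc P {ω | X i ω ∈ u • A ∧ X j ω ∈ v • A}
      = P {ω | u < projA A (X i ω) ∧ v < projA A (X j ω)} := by
        simp only [hiff _ _ hu0, hiff _ _ hv0]
    _ ≤ _ := hRD.measure_lt_inter_lt_le hK hij hu hv
    _ = _ := by rw [hF i hu0, hF j hv0]

theorem measure_mem_claimRegion_slice_inter_le [IsFiniteMeasure P] (hA : InRfam d A)
    (hr : 0 ≤ r) (hx₀ : x₀ < x) (hx : 0 < x)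
    (hRD : RDwith P x₀ K fun i ω => projA A (X i ω)) (hK : 0 ≤ K)
    (hX : ∀ i, Measurable (X i)) (hXnn : ∀ i ω, 0 ≤ X i ω) (hXd : ∀ i, P.map (X i) = F)
    {i j : ℕ} (hij : i ≠ j) {s t : ℝ} (hs : 0 ≤ s) (ht : 0 ≤ t) :
    P {ω | X i ω ∈ Prod.mk s ⁻¹' claimRegion A r T x ∧
        X j ω ∈ Prod.mk t ⁻¹' claimRegion A r T x} ≤
      ENNReal.ofReal K * (claimTail F A r T x s * claimTail F A r T x t) := by
  rw [← measure_claimRegion_slice hs, ← measure_claimRegion_slice ht]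
  rcases lt_or_ge T s with hsT | hsT
  · simp [claimRegion_slice_of_lt hsT]
  rcases lt_or_ge T t with htT | htT
  · simp [claimRegion_slice_of_lt htT]
  have hxle : ∀ {s : ℝ}, 0 ≤ s → x ≤ x * Real.exp (r * s) := fun hs =>
    le_mul_of_one_le_right hx.le (Real.one_le_exp (mul_nonneg hr hs))
  rw [claimRegion_slice hx hsT, claimRegion_slice hx htT, ← mul_assoc]
  exact measure_mem_smul_inter_le hA hRD hK hX hXnn hXd hij (hx₀.trans_le (hxle hs))
    (hx₀.trans_le (hxle ht)) (by positivity) (by positivity)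

theorem measure_claimEvent_inter_le [IsFiniteMeasure P] (hA : InRfam d A) (hr : 0 ≤ r)
    (hx₀ : x₀ < x) (hx : 0 < x) (hRD : RDwith P x₀ K fun i ω => projA A (X i ω)) (hK : 0 ≤ K)
    (hX : ∀ i, Measurable (X i)) (hτ : ∀ i, Measurable (τ i)) (hXnn : ∀ i ω, 0 ≤ X i ω)
    (hXd : ∀ i, P.map (X i) = F) (hτnn : ∀ i ω, 0 ≤ τ i ω)
    (hindep : IndepFun (fun ω i => X i ω) (fun ω i => τ i ω) P) {i j : ℕ} (hij : i ≠ j) :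
    P (claimEvent r X τ A T x i ∩ claimEvent r X τ A T x j) ≤
      ∫⁻ st, ENNReal.ofReal K * (claimTail F A r T x st.1 * claimTail F A r T x st.2)
        ∂P.map fun ω => (τ i ω, τ j ω) := by
  have hσ : Measurable fun ω => (τ i ω, τ j ω) := (hτ i).prodMk (hτ j)
  have hY : Measurable fun ω => (X i ω, X j ω) := (hX i).prodMk (hX j)
  have hind : IndepFun (fun ω => (τ i ω, τ j ω)) (fun ω => (X i ω, X j ω)) P :=
    hindep.symm.comp ((measurable_pi_apply i).prodMk (measurable_pi_apply j))
      ((measurable_pi_apply i).prodMk (measurable_pi_apply j))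
  set M : Set ((ℝ × ℝ) × ((Fin d → ℝ) × (Fin d → ℝ))) :=
    {q | (q.1.1, q.2.1) ∈ claimRegion A r T x ∧ (q.1.2, q.2.2) ∈ claimRegion A r T x}
  have hM : MeasurableSet M :=
    (measurable_fst.fst.prodMk measurable_snd.fst (measurableSet_claimRegion hA hx)).inter
      (measurable_fst.snd.prodMk measurable_snd.snd (measurableSet_claimRegion hA hx))
  calc P (claimEvent r X τ A T x i ∩ claimEvent r X τ A T x j)
      = ∫⁻ st, P.map (fun ω => (X i ω, X j ω)) (Prod.mk st ⁻¹' M)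
          ∂P.map fun ω => (τ i ω, τ j ω) :=
        hind.measure_preimage_prodMk_eq_lintegral hσ hY hM
    _ ≤ _ := by
        refine lintegral_mono_ae ?_
        filter_upwards [(ae_map_iff hσ.aemeasurable
          (measurableSet_Ici.prod measurableSet_Ici)).2
            (ae_of_all _ fun ω => ⟨hτnn i ω, hτnn j ω⟩)] with st ⟨hs, ht⟩
        rw [Measure.map_apply hY (measurable_prodMk_left hM)]
        exact measure_mem_claimRegion_slice_inter_le hA hr hx₀ hx hRD hK hX hXnn hXd hij hs ht

theorem tsum_measure_claimEvent_inter_le [IsFiniteMeasure P] [IsFiniteMeasure F]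
    (hA : InRfam d A) (hr : 0 ≤ r) {C : ℝ} (h32 : Assumption32 P τ T C)
    (hx₀ : x₀ < x) (hx : 0 < x) (hRD : RDwith P x₀ K fun i ω => projA A (X i ω)) (hK : 0 ≤ K)
    (hX : ∀ i, Measurable (X i)) (hτ : ∀ i, Measurable (τ i)) (hXnn : ∀ i ω, 0 ≤ X i ω)
    (hXd : ∀ i, P.map (X i) = F) (hτnn : ∀ i ω, 0 ≤ τ i ω)
    (hindep : IndepFun (fun ω i => X i ω) (fun ω i => τ i ω) P) :
    ∑' p : {p : ℕ × ℕ // p.1 ≠ p.2},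
        P (claimEvent r X τ A T x p.1.1 ∩ claimEvent r X τ A T x p.1.2) ≤
      ENNReal.ofReal C * ENNReal.ofReal K * (∑' i, P (claimEvent r X τ A T x i)) ^ 2 := by
  set h := claimTail F A r T x
  have hh : Measurable h := measurable_claimTail hA hx
  have hsupp : (fun st : ℝ × ℝ => ENNReal.ofReal K * (h st.1 * h st.2)).support ⊆
      Icc 0 T ×ˢ Icc 0 T := fun st hst =>
    ⟨support_claimTail_subset (left_ne_zero_of_mul (right_ne_zero_of_mul hst)),
      support_claimTail_subset (right_ne_zero_of_mul (right_ne_zero_of_mul hst))⟩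
  calc _ ≤ ∑' p : {p : ℕ × ℕ // p.1 ≠ p.2}, ∫⁻ st, ENNReal.ofReal K * (h st.1 * h st.2)
          ∂P.map fun ω => (τ p.1.1 ω, τ p.1.2 ω) :=
        ENNReal.tsum_le_tsum fun p =>
          measure_claimEvent_inter_le hA hr hx₀ hx hRD hK hX hτ hXnn hXd hτnn hindep p.2
    _ = ∫⁻ st, ENNReal.ofReal K * (h st.1 * h st.2) ∂secondFactorial P τ := by
        rw [secondFactorial, lintegral_sum_measure]
    _ ≤ ENNReal.ofReal C * ∫⁻ st, ENNReal.ofReal K * (h st.1 * h st.2) ∂nuProd P τ :=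
        lintegral_le_mul_lintegral_of_support_subset
          (measurableSet_Icc.prod measurableSet_Icc) (h32 · · ·) hsupp
    _ = ENNReal.ofReal C * ENNReal.ofReal K * (∑' i, ∫⁻ s, h s ∂P.map (τ i)) ^ 2 := by
        rw [lintegral_const_mul _ (f := fun st : ℝ × ℝ => h st.1 * h st.2) (by fun_prop),
          lintegral_nuProd_mul P τ hh, mul_assoc]
    _ = _ := by
        simp_rw [measure_claimEvent_eq_lintegral hA hx (hX _) (hτ _)
          (hindep.symm.comp (measurable_pi_apply _) (measurable_pi_apply _)) (hXd _) (hτnn _)]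
        rfl

end ClaimModel

theorem statement14_general
    {Ω : Type*} [MeasurableSpace Ω] (P : Measure Ω) [IsProbabilityMeasure P]
    {d : ℕ} {A : Set (Fin d → ℝ)} (hA : InRfam d A)
    {r : ℝ} (hr : 0 ≤ r) {T : ℝ}
    (F : Measure (Fin d → ℝ)) [IsProbabilityMeasure F]
    (X : ℕ → Ω → Fin d → ℝ) (τ : ℕ → Ω → ℝ)
    (hXmeas : ∀ i, Measurable (X i)) (hτmeas : ∀ i, Measurable (τ i))
    (hXnn : ∀ i ω k, 0 ≤ X i ω k)
    (hXdist : ∀ i, P.map (X i) = F)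
    (hτnn : ∀ i ω, 0 ≤ τ i ω)
    (hindep : IndepFun (fun ω i => X i ω) (fun ω i => τ i ω) P)
    (hmfin : ∀ t : ℝ, (∑' i : ℕ, P {ω | τ i ω ≤ t}) ≠ ⊤)
    (hmT : 0 < ∑' i : ℕ, P {ω | τ i ω ≤ T})
    {C : ℝ} (h32 : Assumption32 P τ T C)
    (hRD : RDA P A X)
    (hFA : ∀ x : ℝ, 0 < x → 0 < F (x • A)) :
    Tendsto (fun x : ℝ =>
        (P {ω | 1 ≤ Jcount r X τ A T x ω}).toReal /
          ∑' i : ℕ, (P {ω | τ i ω ≤ T ∧ Real.exp (-(r * τ i ω)) • X i ω ∈ x • A}).toReal)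
      atTop (𝓝 1) := by
  obtain ⟨x₀, -, K, hK, hRDw⟩ := hRD
  have hind : ∀ i, IndepFun (τ i) (X i) P := fun i =>
    hindep.symm.comp (measurable_pi_apply i) (measurable_pi_apply i)
  have hΛ : Tendsto (fun x => ∑' i, P (claimEvent r X τ A T x i)) atTop (𝓝 0) := by
    have hbound := ENNReal.Tendsto.const_mul (hA.tendsto_measure_smul_atTop_zero F)
      (Or.inr (hmfin T))
    rw [mul_zero] at hbound
    refine tendsto_of_tendsto_of_tendsto_of_le_of_le' tendsto_const_nhds hbound
      (Eventually.of_forall fun _ => zero_le) ?_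
    filter_upwards [eventually_gt_atTop 0] with x hx
    exact tsum_measure_claimEvent_le hA hr hx hXmeas hXnn hXdist hτnn hind
  have hΛpos : ∀ᶠ x in atTop, ∑' i, P (claimEvent r X τ A T x i) ≠ 0 := by
    filter_upwards [eventually_gt_atTop 0] with x hx
    exact (tsum_measure_claimEvent_pos hA hr hx hXmeas hXnn hXdist hind hmT
      (hFA _ (by positivity))).ne'
  have hbonferroni : ∀ᶠ x in atTop, ∑' i, P (claimEvent r X τ A T x i) ≤
      P (⋃ i, claimEvent r X τ A T x i) +
        ENNReal.ofReal C * ENNReal.ofReal K * (∑' i, P (claimEvent r X τ A T x i)) ^ 2 := by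
    filter_upwards [eventually_gt_atTop x₀, eventually_gt_atTop 0] with x hx₀ hx
    refine (tsum_measure_le_measure_iUnion_add P fun i =>
      measurableSet_claimEvent hA hx (hXmeas i) (hτmeas i)).trans ?_
    gcongr
    exact tsum_measure_claimEvent_inter_le hA hr h32 hx₀ hx hRDw hK.le hXmeas hτmeas hXnn
      hXdist hτnn hindep
  convert tendsto_toReal_div_of_le_of_le_add_sq (by finiteness) hΛpos hΛ
    (Eventually.of_forall fun x => measure_iUnion_le _) hbonferroni using 2 with x
  rw [setOf_one_le_Jcount, ENNReal.tsum_toReal_eq fun i => measure_ne_top _ _]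
  rfl

/-- Step (2) in the proof of Theorem 3.1: `P(J_x(T) ≥ 1) ∼ Λ_x` as `x → ∞`. -/
theorem statement14
    {Ω : Type*} [MeasurableSpace Ω] (P : Measure Ω) [IsProbabilityMeasure P]
    {d : ℕ} (hd : 1 ≤ d) {A : Set (Fin d → ℝ)} (hA : InRfam d A)
    {r : ℝ} (hr : 0 ≤ r) {T : ℝ} (hT : 0 < T)
    (F : Measure (Fin d → ℝ)) [IsProbabilityMeasure F]
    (X : ℕ → Ω → Fin d → ℝ) (τ : ℕ → Ω → ℝ)
    (hXmeas : ∀ i, Measurable (X i)) (hτmeas : ∀ i, Measurable (τ i))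
    (hXnn : ∀ i ω k, 0 ≤ X i ω k)
    (hXdist : ∀ i, P.map (X i) = F)
    (hτnn : ∀ i ω, 0 ≤ τ i ω) (hτmono : ∀ i ω, τ i ω ≤ τ (i + 1) ω)
    (hindep : IndepFun (fun ω i => X i ω) (fun ω i => τ i ω) P)
    (hmfin : ∀ t : ℝ, (∑' i : ℕ, P {ω | τ i ω ≤ t}) ≠ ⊤)
    (hmT : 0 < ∑' i : ℕ, P {ω | τ i ω ≤ T})
    {C : ℝ} (hC : 0 ≤ C) (h32 : Assumption32 P τ T C)
    (hRD : RDA P A X)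
    (hFA : ∀ x : ℝ, 0 < x → 0 < F (x • A)) :
    Tendsto (fun x : ℝ =>
        (P {ω | 1 ≤ Jcount r X τ A T x ω}).toReal /
          ∑' i : ℕ, (P {ω | τ i ω ≤ T ∧ Real.exp (-(r * τ i ω)) • X i ω ∈ x • A}).toReal)
      atTop (𝓝 1) :=
  statement14_general P hA hr F X τ hXmeas hτmeas hXnn hXdist hτnn hindep hmfin hmT h32 hRD hFA
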